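/- arXiv:0909.5319 — 2 statements merged into one kernel-verified Lean document; each statement's English description precedes it below -/
import Mathlib

section
/- For every integer d ≥ 2, the formal power series (1 − yz)·(1 − Q_d)⁻¹ in ℤ[[y,z]] has all coefficients nonnegative, where Q_d = Σ_{i,j ≥ 1} C(d, i+j) yⁱzʲ. (In particular Q_d − yz ≥ 0, since the coefficient of yz in Q_d is C(d,2) ≥ 1.) -/
/-!
Writing `(1 - yz)(1 - Q)⁻¹ = 1 + (Q - yz)(1 - Q)⁻¹`, it suffices that `Q - yz ≥ 0` and
`(1 - Q)⁻¹ ≥ 0`. The latter holds for any `Q ≥ 0` without constant term: `B = (1 - Q)⁻¹` solves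
`B = 1 + Q B`, which determines each coefficient of `B` by strictly smaller ones.
-/

open MvPowerSeries

/-- `Q_d = Σ_{i,j ≥ 1} C(d, i+j) yⁱzʲ` as a power series in `ℤ[[y,z]]`
(`y = X 0`, `z = X 1`). -/
def Q (d : ℕ) : MvPowerSeries (Fin 2) ℤ :=
  fun e => if 1 ≤ e 0 ∧ 1 ≤ e 1 then (d.choose (e 0 + e 1) : ℤ) else 0

namespace MvPowerSeries

variable {σ R : Type*}

def CoeffNonneg [Semiring R] [PartialOrder R] (F : MvPowerSeries σ R) : Prop :=
  ∀ e, 0 ≤ coeff e F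

section Semiring

variable [CommSemiring R] [PartialOrder R] [IsOrderedRing R] {F G : MvPowerSeries σ R}

theorem coeffNonneg_one : CoeffNonneg (1 : MvPowerSeries σ R) := by
  classical
  intro e
  rw [coeff_one]
  split <;> simp

theorem CoeffNonneg.add (hF : CoeffNonneg F) (hG : CoeffNonneg G) : CoeffNonneg (F + G) :=
  fun e => by simpa only [map_add] using add_nonneg (hF e) (hG e)

theorem CoeffNonneg.mul (hF : CoeffNonneg F) (hG : CoeffNonneg G) : CoeffNonneg (F * G) := by
  classical
  intro e
  rw [coeff_mul]
  exact Finset.sum_nonneg fun p _ => mul_nonneg (hF p.1) (hG p.2)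

end Semiring

section Ring

variable [CommRing R] [PartialOrder R] [IsOrderedRing R] {F G : MvPowerSeries σ R}

theorem CoeffNonneg.inverse_one_sub (hF : CoeffNonneg F) (hF₀ : constantCoeff F = 0) :
    CoeffNonneg (Ring.inverse (1 - F)) := by
  classical
  set B := Ring.inverse (1 - F)
  have hB : B = 1 + F * B := by
    have hunit : IsUnit (1 - F) := by simp [isUnit_iff_constantCoeff, hF₀]
    linear_combination Ring.mul_inverse_cancel _ hunit
  intro e
  induction e using WellFoundedLT.induction with
  | ind e ih =>
    rw [hB, map_add, coeff_mul]
    refine add_nonneg (coeffNonneg_one e) (Finset.sum_nonneg fun p hp => ?_)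
    obtain ⟨p, q⟩ := p
    rw [Finset.HasAntidiagonal.mem_antidiagonal] at hp
    rcases eq_or_ne p 0 with rfl | hp₀
    · rw [coeff_zero_eq_constantCoeff_apply, hF₀, zero_mul]
    · refine mul_nonneg (hF p) (ih q ?_)
      rw [← hp]
      exact lt_add_of_pos_left q (pos_iff_ne_zero.mpr hp₀)

theorem CoeffNonneg.one_sub_mul_inverse_one_sub (hF : CoeffNonneg F) (hF₀ : constantCoeff F = 0)
    (hFG : CoeffNonneg (F - G)) : CoeffNonneg ((1 - G) * Ring.inverse (1 - F)) := by
  have hunit : IsUnit (1 - F) := by simp [isUnit_iff_constantCoeff, hF₀]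
  have h : (1 - G) * Ring.inverse (1 - F) = 1 + (F - G) * Ring.inverse (1 - F) := by
    linear_combination Ring.mul_inverse_cancel _ hunit
  rw [h]
  exact coeffNonneg_one.add (hFG.mul (hF.inverse_one_sub hF₀))

end Ring

end MvPowerSeries

theorem coeff_Q (d : ℕ) (e : Fin 2 →₀ ℕ) :
    coeff e (Q d) = if 1 ≤ e 0 ∧ 1 ≤ e 1 then (d.choose (e 0 + e 1) : ℤ) else 0 := rfl

theorem coeffNonneg_Q (d : ℕ) : CoeffNonneg (Q d) := fun e => by
  rw [coeff_Q]; split <;> positivity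

theorem constantCoeff_Q (d : ℕ) : constantCoeff (Q d) = 0 := by
  rw [← coeff_zero_eq_constantCoeff_apply, coeff_Q]
  simp

theorem coeffNonneg_Q_sub_X_mul_X {d : ℕ} (hd : 2 ≤ d) : CoeffNonneg (Q d - X 0 * X 1) := by
  classical
  intro e
  rw [X, X, monomial_mul_monomial, one_mul, map_sub, coeff_monomial]
  split_ifs with he
  · subst he
    simpa [coeff_Q, Nat.one_le_iff_ne_zero] using (Nat.choose_pos hd).ne'
  · simpa using coeffNonneg_Q d e

/-- For `d ≥ 2`, the series `Q_d - yz` has nonnegative coefficients, and the series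
`(1 - yz)·(1 - Q_d)⁻¹` has nonnegative coefficients (`1 - Q_d` is a unit of
`ℤ[[y,z]]` and `Ring.inverse` gives its inverse). -/
theorem stmt4 (d : ℕ) (hd : 2 ≤ d) :
    (∀ e : Fin 2 →₀ ℕ, 0 ≤ coeff e (Q d - X 0 * X 1)) ∧
    (∀ e : Fin 2 →₀ ℕ, 0 ≤ coeff e ((1 - X 0 * X 1) * Ring.inverse (1 - Q d))) :=
  ⟨coeffNonneg_Q_sub_X_mul_X hd,
    (coeffNonneg_Q d).one_sub_mul_inverse_one_sub (constantCoeff_Q d)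
      (coeffNonneg_Q_sub_X_mul_X hd)⟩
end

section
/- Let c ≥ 1 and let d₁, …, d_c be positive integers. Define H(𝐝) = Σ_{∅ ≠ S ⊆ {1,…,c}} ((1+y)(1+z))^{|S|−1} · Π_{i∈S} H(dᵢ) in ℤ[[y,z]]. Then (1 − yz)·H(𝐝) has all coefficients nonnegative; equivalently, for all p, q ≥ 0 the coefficient of y^{p+1}z^{q+1} in H(𝐝) is at least the coefficient of y^p z^q in H(𝐝). (By Hirzebruch's formula, the coefficient of y^p z^q in H(𝐝) is the primitive Hodge number h^{p,q}_o of a smooth complete intersection of multidegree 𝐝 = (d₁,…,d_c) and dimension p+q in projective space, so this says h^{p+1,q+1}(𝐝) ≥ h^{p,q}(𝐝).) -/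
open MvPowerSeries

/-- `P_d = Σ_{i,j ≥ 0} C(d-1, i+j+1) yⁱzʲ` as a power series in `ℤ[[y,z]]`. -/
def P (d : ℕ) : MvPowerSeries (Fin 2) ℤ :=
  fun e => ((d - 1).choose (e 0 + e 1 + 1) : ℤ)

/-- `H(d) = P_d · (1 - Q_d)⁻¹` (`1 - Q_d` is a unit of `ℤ[[y,z]]`, and
`Ring.inverse` gives its inverse). -/
noncomputable def H (d : ℕ) : MvPowerSeries (Fin 2) ℤ := P d * Ring.inverse (1 - Q d)

/-- `H(𝐝) = Σ_{∅ ≠ S ⊆ {1,…,c}} ((1+y)(1+z))^{|S|-1} · Π_{i∈S} H(dᵢ)`, the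
generating series of the primitive Hodge numbers of a complete intersection of
multidegree `𝐝 = (d₁,…,d_c)`. -/
noncomputable def Hmulti {c : ℕ} (ds : Fin c → ℕ) : MvPowerSeries (Fin 2) ℤ :=
  ∑ S ∈ Finset.univ.powerset.erase (∅ : Finset (Fin c)),
    ((1 + X 0) * (1 + X 1)) ^ (S.card - 1) * ∏ i ∈ S, H (ds i)

/-! Coefficientwise nonnegative series form a subsemiring of `ℤ[[y,z]]`, which contains
`(1 - Q)⁻¹ = 1 + Q (1 - Q)⁻¹` whenever `Q ≥ 0` has no constant term; hence `H(d) ≥ 0`.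
From `(1 - Q_d) H(d) = P_d` we get `(1 - yz) H(d) = P_d + (Q_d - yz) H(d)`, which is `≥ 0` because
the `yz`-coefficient of `Q_d` is `C(d,2) ≥ 1` for `d ≥ 2` (and `H(d) = 0` for `d ≤ 1`, as `P_d = 0`).
In every summand of `H(𝐝)` the factor `1 - yz` is absorbed by one factor `H(dᵢ)`. -/

namespace MvPowerSeries

variable (σ R : Type*) [Semiring R] [PartialOrder R] [IsOrderedRing R]

def nonneg : Subsemiring (MvPowerSeries σ R) where
  carrier := {F | ∀ e, 0 ≤ coeff e F}
  mul_mem' {F G} hF hG e := by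
    classical
    rw [coeff_mul]
    exact Finset.sum_nonneg fun p _ => mul_nonneg (hF p.1) (hG p.2)
  one_mem' e := by
    classical
    rw [coeff_one]; split <;> simp
  add_mem' {F G} hF hG e := by
    rw [map_add]; exact add_nonneg (hF e) (hG e)
  zero_mem' e := by simp

variable {σ R}

theorem mem_nonneg {F : MvPowerSeries σ R} : F ∈ nonneg σ R ↔ ∀ e, 0 ≤ coeff e F := Iff.rfl

theorem X_mem_nonneg (i : σ) : X i ∈ nonneg σ R := by
  classical
  intro e; rw [X, coeff_monomial]; split <;> simp

theorem isUnit_one_sub_of_constantCoeff_eq_zero {R : Type*} [Ring R] {Q : MvPowerSeries σ R}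
    (hQ0 : constantCoeff Q = 0) : IsUnit (1 - Q) := by
  rw [isUnit_iff_constantCoeff, map_sub, map_one, hQ0, sub_zero]
  exact isUnit_one

theorem inverse_one_sub_mem_nonneg {R : Type*} [CommRing R] [PartialOrder R] [IsOrderedRing R]
    {Q : MvPowerSeries σ R} (hQ : Q ∈ nonneg σ R) (hQ0 : constantCoeff Q = 0) :
    Ring.inverse (1 - Q) ∈ nonneg σ R := by
  classical
  set I := Ring.inverse (1 - Q)
  -- `I = 1 + Q I` determines each coefficient of `I` from strictly smaller ones
  have hfix : I = 1 + Q * I := by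
    linear_combination Ring.mul_inverse_cancel _ (isUnit_one_sub_of_constantCoeff_eq_zero hQ0)
  intro e
  induction e using WellFoundedLT.induction with
  | _ e ih =>
    rw [hfix, map_add, coeff_mul]
    refine add_nonneg ((nonneg σ R).one_mem e) (Finset.sum_nonneg fun p hp => ?_)
    obtain ⟨p₁, p₂⟩ := p
    rw [Finset.HasAntidiagonal.mem_antidiagonal] at hp
    rcases eq_or_ne p₁ 0 with rfl | hp₁
    · simp [hQ0]
    · refine mul_nonneg (hQ p₁) (ih p₂ ?_)
      rw [← hp]
      exact lt_add_of_pos_left _ (pos_iff_ne_zero.mpr hp₁)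

end MvPowerSeries

theorem coeff_P (d : ℕ) (e : Fin 2 →₀ ℕ) :
    coeff e (P d) = ((d - 1).choose (e 0 + e 1 + 1) : ℤ) := rfl

theorem Q_mem_nonneg (d : ℕ) : Q d ∈ nonneg (Fin 2) ℤ := fun e => by
  rw [coeff_Q]; split <;> positivity

theorem P_mem_nonneg (d : ℕ) : P d ∈ nonneg (Fin 2) ℤ := fun e => by
  rw [coeff_P]; positivity

theorem H_mem_nonneg (d : ℕ) : H d ∈ nonneg (Fin 2) ℤ :=
  mul_mem (P_mem_nonneg d) (inverse_one_sub_mem_nonneg (Q_mem_nonneg d) (constantCoeff_Q d))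

theorem P_eq_zero_of_le_one {d : ℕ} (hd : d ≤ 1) : P d = 0 := by
  ext e
  simp [coeff_P, Nat.sub_eq_zero_of_le hd]

theorem Q_sub_X_mul_X_mem_nonneg {d : ℕ} (hd : 2 ≤ d) : Q d - X 0 * X 1 ∈ nonneg (Fin 2) ℤ := by
  intro e
  rw [map_sub, X, X, monomial_mul_monomial, coeff_monomial]
  split_ifs with he
  · subst he
    simpa [coeff_Q, Nat.one_le_iff_ne_zero] using (Nat.choose_pos hd).ne'
  · simpa using Q_mem_nonneg d e

theorem one_sub_Q_mul_H (d : ℕ) : (1 - Q d) * H d = P d := by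
  rw [H, mul_left_comm, Ring.mul_inverse_cancel _ (isUnit_one_sub_of_constantCoeff_eq_zero
    (constantCoeff_Q d)), mul_one]

theorem one_sub_X_mul_X_mul_H (d : ℕ) :
    (1 - X 0 * X 1) * H d = P d + (Q d - X 0 * X 1) * H d := by
  linear_combination one_sub_Q_mul_H d

theorem one_sub_X_mul_X_mul_H_mem_nonneg (d : ℕ) :
    (1 - X 0 * X 1) * H d ∈ nonneg (Fin 2) ℤ := by
  rcases le_or_gt d 1 with hd | hd
  · simp [H, P_eq_zero_of_le_one hd]
  · rw [one_sub_X_mul_X_mul_H]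
    exact add_mem (P_mem_nonneg d) (mul_mem (Q_sub_X_mul_X_mem_nonneg hd) (H_mem_nonneg d))

theorem stmt7_general (c : ℕ) (ds : Fin c → ℕ) :
    ∀ e : Fin 2 →₀ ℕ, 0 ≤ coeff e ((1 - X 0 * X 1) * Hmulti ds) := by
  rw [← mem_nonneg, Hmulti, Finset.mul_sum]
  refine sum_mem fun S hS => ?_
  obtain ⟨i, hi⟩ := Finset.nonempty_iff_ne_empty.mpr (Finset.mem_erase.mp hS).1
  have hsplit : (1 - X 0 * X 1) * (((1 + X 0) * (1 + X 1)) ^ (S.card - 1) * ∏ j ∈ S, H (ds j)) =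
      ((1 + X 0) * (1 + X 1)) ^ (S.card - 1) * ((1 - X 0 * X 1) * H (ds i)) *
        ∏ j ∈ S.erase i, H (ds j) := by
    rw [← Finset.mul_prod_erase S _ hi]; ring
  have hlin : (1 + X 0) * (1 + X 1) ∈ nonneg (Fin 2) ℤ :=
    mul_mem (add_mem (one_mem _) (X_mem_nonneg 0)) (add_mem (one_mem _) (X_mem_nonneg 1))
  rw [hsplit]
  exact mul_mem (mul_mem (pow_mem hlin _) (one_sub_X_mul_X_mul_H_mem_nonneg _))
    (prod_mem fun j _ => H_mem_nonneg _)

/-- Lemma 2.1: for `𝐝 = (d₁,…,d_c)` with `c ≥ 1` and each `dᵢ ≥ 1`, the series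
`(1 - yz)·H(𝐝)` has nonnegative coefficients, i.e. `h^{p+1,q+1}(𝐝) ≥ h^{p,q}(𝐝)`. -/
theorem stmt7 (c : ℕ) (hc : 1 ≤ c) (ds : Fin c → ℕ) (hds : ∀ i, 1 ≤ ds i) :
    ∀ e : Fin 2 →₀ ℕ, 0 ≤ coeff e ((1 - X 0 * X 1) * Hmulti ds) :=
  stmt7_general c ds
end
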